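/- arXiv:2204.03312 — 10 statements merged into one kernel-verified Lean document; each statement's English description precedes it below -/
import Mathlib

section
/- Let f(t) = Σ_{j=1}^M γ_j cos(φ_j t) with real γ_j and pairwise distinct φ_j ∈ [0, K), h = π/K, N > 2M, and suppose φ_j h N ∉ π·ℤ for all j. Define f_ℓ = f(h(2ℓ+1)/2) and the DCT-II coefficients f̂_k = Σ_{ℓ=0}^{N-1} f_ℓ cos(πk(2ℓ+1)/(2N)). Then for each k = 0,…,N−1: (-1)^k (cos(πk/(2N)))^{-1} f̂_k = Σ_{j=1}^M γ_j sin(φ_j h N) sin(φ_j h/2) / (cos(kπ/N) − cos(φ_j h)). -/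
open Real Finset

lemma alg (c s p S q : ℝ) (hc : c ≠ 0) (hs : s ≠ 0) (hp : p ≠ 0)
    (hsum : s + p = 2 * q * c) :
    c⁻¹ * ((S / (2 * s) + S / (2 * p)) / 2) = S * q / (2 * s * p) := by
  have h1 : S / (2 * s) + S / (2 * p) = S * (s + p) / (2 * (s * p)) := by
    field_simp
    ring
  rw [h1, hsum]
  field_simp

lemma sum_cos_half (c : ℝ) (N : ℕ) :
    2 * Real.sin (c / 2) * ∑ ℓ ∈ Finset.range N, Real.cos ((2 * (ℓ:ℝ) + 1) * c / 2)
      = Real.sin (N * c) := by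
  induction N with
  | zero => simp
  | succ n ih =>
    rw [Finset.sum_range_succ, mul_add, ih]
    push_cast
    have h1 : ((n:ℝ) + 1) * c = (2 * n + 1) * c / 2 + c / 2 := by ring
    have h2 : (n:ℝ) * c = (2 * n + 1) * c / 2 - c / 2 := by ring
    rw [h1, h2, Real.sin_add, Real.sin_sub]
    ring

lemma key_lemma (a b : ℝ) (N k : ℕ) (hN : 0 < N) (hk : k < N)
    (hb : b = k * π / N) (ha0 : 0 < a) (haπ : a < π) (hab : a * N ≠ k * π) :
    (-1 : ℝ) ^ k * (Real.cos (b / 2))⁻¹ *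
      ∑ ℓ ∈ Finset.range N, Real.cos ((2 * (ℓ:ℝ) + 1) * a / 2) * Real.cos ((2 * (ℓ:ℝ) + 1) * b / 2)
    = Real.sin (a * N) * Real.sin (a / 2) / (Real.cos b - Real.cos a) := by
  have hNR : (0:ℝ) < N := by exact_mod_cast hN
  have hb0 : 0 ≤ b := by rw [hb]; positivity
  have hbπ : b < π := by
    rw [hb, div_lt_iff₀ hNR]
    have : (k:ℝ) < N := by exact_mod_cast hk
    nlinarith [Real.pi_pos]
  have hsp : 0 < Real.sin ((a + b) / 2) := by
    apply Real.sin_pos_of_pos_of_lt_pi <;> nlinarith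
  have hane : a ≠ b := by
    intro hEq; apply hab; rw [hEq, hb]; field_simp
  have hsm : Real.sin ((a - b) / 2) ≠ 0 := by
    intro hz
    rw [Real.sin_eq_zero_iff_of_lt_of_lt (by nlinarith) (by nlinarith)] at hz
    exact hane (by linarith)
  have hcb : 0 < Real.cos (b / 2) := by
    apply Real.cos_pos_of_mem_Ioo
    constructor <;> [nlinarith [Real.pi_pos]; nlinarith]
  have hsum : ∑ ℓ ∈ Finset.range N, Real.cos ((2 * (ℓ:ℝ) + 1) * a / 2) * Real.cos ((2 * (ℓ:ℝ) + 1) * b / 2)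
      = ((∑ ℓ ∈ Finset.range N, Real.cos ((2 * (ℓ:ℝ) + 1) * (a + b) / 2))
        + ∑ ℓ ∈ Finset.range N, Real.cos ((2 * (ℓ:ℝ) + 1) * (a - b) / 2)) / 2 := by
    rw [← Finset.sum_add_distrib, Finset.sum_div]
    refine Finset.sum_congr rfl fun ℓ _ => ?_
    have e1 : (2 * (ℓ:ℝ) + 1) * (a + b) / 2 = (2 * ℓ + 1) * a / 2 + (2 * ℓ + 1) * b / 2 := by ring
    have e2 : (2 * (ℓ:ℝ) + 1) * (a - b) / 2 = (2 * ℓ + 1) * a / 2 - (2 * ℓ + 1) * b / 2 := by ring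
    rw [e1, e2, Real.cos_add, Real.cos_sub]
    ring
  have hNb : (N:ℝ) * b = k * π := by rw [hb]; field_simp
  have hs1 : Real.sin ((N:ℝ) * (a + b)) = (-1)^k * Real.sin (a * N) := by
    have h3 : (N:ℝ) * (a + b) = a * N + ((k:ℤ):ℝ) * π := by push_cast; nlinarith [hNb]
    rw [h3, Real.sin_add_int_mul_pi]; norm_num
  have hs2 : Real.sin ((N:ℝ) * (a - b)) = (-1)^k * Real.sin (a * N) := by
    have h3 : (N:ℝ) * (a - b) = a * N + ((-(k:ℤ) : ℤ):ℝ) * π := by push_cast; nlinarith [hNb]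
    rw [h3, Real.sin_add_int_mul_pi, zpow_neg, zpow_natCast, ← inv_pow, inv_neg, inv_one]
  have eS1 : ∑ ℓ ∈ Finset.range N, Real.cos ((2 * (ℓ:ℝ) + 1) * (a + b) / 2)
      = (-1)^k * Real.sin (a * N) / (2 * Real.sin ((a+b)/2)) := by
    rw [eq_div_iff (by positivity)]
    have := sum_cos_half (a+b) N
    rw [hs1] at this
    linarith [this]
  have eS2 : ∑ ℓ ∈ Finset.range N, Real.cos ((2 * (ℓ:ℝ) + 1) * (a - b) / 2)
      = (-1)^k * Real.sin (a * N) / (2 * Real.sin ((a-b)/2)) := by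
    rw [eq_div_iff (by simpa using mul_ne_zero two_ne_zero hsm)]
    have := sum_cos_half (a-b) N
    rw [hs2] at this
    linarith [this]
  have hcc : Real.cos b - Real.cos a = 2 * Real.sin ((a + b) / 2) * Real.sin ((a - b) / 2) := by
    rw [Real.cos_sub_cos]
    have h4 : (b - a) / 2 = -((a - b)/2) := by ring
    rw [show (b + a)/2 = (a + b)/2 by ring, h4, Real.sin_neg]
    ring
  have hss : Real.sin ((a+b)/2) + Real.sin ((a-b)/2) = 2 * Real.sin (a/2) * Real.cos (b/2) := by
    rw [show (a+b)/2 = a/2 + b/2 by ring, show (a-b)/2 = a/2 - b/2 by ring,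
      Real.sin_add, Real.sin_sub]
    ring
  have hccne : Real.cos b - Real.cos a ≠ 0 := by
    rw [hcc]
    rcases hsm.lt_or_gt with h | h
    · nlinarith
    · nlinarith
  rw [hsum, eS1, eS2, hcc]
  have hm1 : ((-1:ℝ))^k * (-1:ℝ)^k = 1 := by
    rw [← pow_add, ← two_mul, pow_mul]; norm_num
  have step1 : ((-1:ℝ)^k * Real.sin (a*N) / (2 * Real.sin ((a+b)/2))
      + (-1:ℝ)^k * Real.sin (a*N) / (2 * Real.sin ((a-b)/2))) / 2
      = (-1:ℝ)^k * ((Real.sin (a*N) / (2 * Real.sin ((a+b)/2))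
        + Real.sin (a*N) / (2 * Real.sin ((a-b)/2))) / 2) := by ring
  rw [step1, show ∀ x y z : ℝ, x * y * (x * z) = (x * x) * (y * z) from fun x y z => by ring,
    hm1, one_mul]
  exact alg _ _ _ _ _ (ne_of_gt hcb) hsp.ne' hsm hss

theorem dct_coefficients_of_cosine_sum
    (M N : ℕ) (hM : 1 ≤ M) (hMN : 2 * M < N)
    (K h : ℝ) (hK : 0 < K) (hh : h = π / K)
    (γ : Fin M → ℝ) (hγ : ∀ j, γ j ≠ 0)
    (φ : Fin M → ℝ) (hφ : ∀ j, φ j ∈ Set.Ico (0 : ℝ) K)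
    (hφinj : Function.Injective φ)
    (hnonint : ∀ j, ∀ m : ℤ, φ j * h * N ≠ m * π)
    (f : ℝ → ℝ) (hf : ∀ t, f t = ∑ j, γ j * Real.cos (φ j * t))
    (fhat : ℕ → ℝ)
    (hfhat : ∀ k, fhat k = ∑ ℓ ∈ Finset.range N,
        f (h * (2 * (ℓ : ℝ) + 1) / 2) * Real.cos (π * k * (2 * (ℓ : ℝ) + 1) / (2 * N))) :
    ∀ k < N, (-1 : ℝ) ^ k * (Real.cos (π * k / (2 * N)))⁻¹ * fhat k
      = ∑ j, γ j * Real.sin (φ j * h * N) * Real.sin (φ j * h / 2) /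
          (Real.cos (k * π / N) - Real.cos (φ j * h)) := by
  intro k hk
  have hN : 0 < N := lt_of_le_of_lt (Nat.zero_le _) hk
  have hNR : (0:ℝ) < N := by exact_mod_cast hN
  have hhpos : 0 < h := by rw [hh]; positivity
  set b : ℝ := k * π / N with hbdef
  have hcosb : Real.cos (π * k / (2 * N)) = Real.cos (b / 2) := by
    congr 1; rw [hbdef]; field_simp
  have hfhat' : fhat k = ∑ j, ∑ ℓ ∈ Finset.range N,
      γ j * (Real.cos ((2 * (ℓ:ℝ) + 1) * (φ j * h) / 2) * Real.cos ((2 * (ℓ:ℝ) + 1) * b / 2)) := by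
    rw [hfhat k, Finset.sum_comm]
    refine Finset.sum_congr rfl fun ℓ _ => ?_
    rw [hf, Finset.sum_mul]
    refine Finset.sum_congr rfl fun j _ => ?_
    have e1 : φ j * (h * (2 * (ℓ:ℝ) + 1) / 2) = (2 * (ℓ:ℝ) + 1) * (φ j * h) / 2 := by ring
    have e2 : π * k * (2 * (ℓ:ℝ) + 1) / (2 * N) = (2 * (ℓ:ℝ) + 1) * b / 2 := by
      rw [hbdef]; field_simp
    rw [e1, e2]; ring
  rw [hfhat', hcosb, Finset.mul_sum]
  refine Finset.sum_congr rfl fun j _ => ?_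
  have haj0 : 0 < φ j * h := by
    rcases lt_or_eq_of_le (hφ j).1 with h1 | h1
    · positivity
    · exfalso; exact hnonint j 0 (by rw [← h1]; push_cast; ring)
  have hajπ : φ j * h < π := by
    rw [hh]
    calc φ j * (π / K) < K * (π / K) :=
          mul_lt_mul_of_pos_right (hφ j).2 (by positivity)
      _ = π := by field_simp
  have hab : (φ j * h) * N ≠ k * π := by
    intro hEq
    exact hnonint j k (by push_cast; linarith [hEq])
  have key := key_lemma (φ j * h) b N k hN hk hbdef haj0 hajπ hab
  rw [← Finset.mul_sum]
  calc (-1:ℝ)^k * (Real.cos (b/2))⁻¹ * (γ j * ∑ ℓ ∈ Finset.range N,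
        Real.cos ((2 * (ℓ:ℝ) + 1) * (φ j * h) / 2) * Real.cos ((2 * (ℓ:ℝ) + 1) * b / 2))
      = γ j * ((-1:ℝ)^k * (Real.cos (b/2))⁻¹ * ∑ ℓ ∈ Finset.range N,
        Real.cos ((2 * (ℓ:ℝ) + 1) * (φ j * h) / 2) * Real.cos ((2 * (ℓ:ℝ) + 1) * b / 2)) := by ring
    _ = γ j * (Real.sin ((φ j * h) * N) * Real.sin ((φ j * h) / 2) / (Real.cos b - Real.cos (φ j * h))) := by rw [key]
    _ = γ j * Real.sin (φ j * h * N) * Real.sin (φ j * h / 2) / (Real.cos b - Real.cos (φ j * h)) := by ring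
end

section
/- The limit as φ → kπ/(hN) of sin(φhN) sin(φh/2) / (cos(kπ/N) − cos(φh)) equals (-1)^k N / (2 cos(kπ/(2N))), for any integer k with 1 ≤ k ≤ N−1 and h > 0. -/
/-! Both numerator and denominator are differentiable and vanish at `a = kπ/(hN)`, so the limit
is the quotient of the derivatives there: `(-1)^k hN sin θ / (h sin 2θ)` with `θ = kπ/(2N)`,
and `sin 2θ = 2 sin θ cos θ` with `sin θ ≠ 0` (as `0 < θ < π/2`) leaves `(-1)^k N / (2 cos θ)`. -/

open Real Filter Topology

theorem tendsto_div_nhdsNE_of_hasDerivAt {𝕜 : Type*} [NontriviallyNormedField 𝕜]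
    {f g : 𝕜 → 𝕜} {f' g' a : 𝕜} (hf : HasDerivAt f f' a) (hg : HasDerivAt g g' a)
    (hfa : f a = 0) (hga : g a = 0) (hg' : g' ≠ 0) :
    Tendsto (fun x => f x / g x) (𝓝[≠] a) (𝓝 (f' / g')) := by
  refine ((hasDerivAt_iff_tendsto_slope.mp hf).div
    (hasDerivAt_iff_tendsto_slope.mp hg) hg').congr' ?_
  filter_upwards [self_mem_nhdsWithin] with x hx
  simp only [Pi.div_apply, slope_def_field, hfa, hga, sub_zero]
  exact div_div_div_cancel_right₀ (sub_ne_zero.mpr hx) _ _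

theorem nat_mul_pi_div_two_mul_mem_Ioo {k N : ℕ} (hk : 0 < k) (hkN : k < N) :
    (k * π / (2 * N) : ℝ) ∈ Set.Ioo 0 (π / 2) := by
  have hk' : (0 : ℝ) < k := by exact_mod_cast hk
  have hkN' : (k : ℝ) < N := by exact_mod_cast hkN
  have hN : (0 : ℝ) < N := hk'.trans hkN'
  refine ⟨by positivity, ?_⟩
  rw [div_lt_div_iff₀ (by positivity) two_pos]
  nlinarith [pi_pos]

theorem hasDerivAt_const_sub_cos_mul (c h x : ℝ) :
    HasDerivAt (fun φ => c - cos (φ * h)) (sin (x * h) * h) x := by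
  simpa using (((hasDerivAt_id x).mul_const h).cos).const_sub c

theorem hasDerivAt_sin_mul_mul_sin_mul_div_two {h N x : ℝ} (hN : N ≠ 0) (k : ℕ)
    (hx : x * h = k * π / N) :
    HasDerivAt (fun φ => sin (φ * h * N) * sin (φ * h / 2))
      ((-1) ^ k * (h * N) * sin (k * π / (2 * N))) x := by
  have hxN : x * h * N = k * π := by rw [hx]; field_simp
  have hx2 : x * h / 2 = k * π / (2 * N) := by rw [hx]; ring
  have hderiv := ((((hasDerivAt_id x).mul_const h).mul_const N).sin).mul
    (((hasDerivAt_id x).mul_const h).div_const 2).sin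
  simp only [id, one_mul, hxN, hx2, sin_nat_mul_pi, cos_nat_mul_pi, zero_mul, add_zero]
    at hderiv
  exact hderiv.congr_deriv (by ring)

theorem limit_removable_singularity_general (h : ℝ) (hh : 0 < h) (N k : ℕ)
    (hk1 : 1 ≤ k) (hkN : k ≤ N - 1) :
    Filter.Tendsto
      (fun φ : ℝ => Real.sin (φ * h * N) * Real.sin (φ * h / 2) /
        (Real.cos (k * π / N) - Real.cos (φ * h)))
      (𝓝[≠] (k * π / (h * N)))
      (𝓝 ((-1 : ℝ) ^ k * N / (2 * Real.cos (k * π / (2 * N))))) := by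
  have hN : (N : ℝ) ≠ 0 := by norm_cast; omega
  have hah : k * π / (h * N) * h = k * π / N := by field_simp
  have hdouble : k * π / N = 2 * (k * π / (2 * N)) := by field_simp
  obtain ⟨hθ0, hθ⟩ := nat_mul_pi_div_two_mul_mem_Ioo (k := k) (N := N) (by omega) (by omega)
  have hsin := sin_pos_of_pos_of_lt_pi hθ0 (by linarith)
  have hcos := cos_pos_of_mem_Ioo ⟨by linarith, hθ⟩
  have hden := hasDerivAt_const_sub_cos_mul (cos (k * π / N)) h (k * π / (h * N))
  rw [hah] at hden
  have hlim := tendsto_div_nhdsNE_of_hasDerivAt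
    (hasDerivAt_sin_mul_mul_sin_mul_div_two hN k hah) hden
    (by rw [hah, div_mul_cancel₀ _ hN, sin_nat_mul_pi, zero_mul]) (by rw [hah, sub_self])
    (by rw [hdouble, sin_two_mul]; positivity)
  convert hlim using 2
  set θ : ℝ := k * π / (2 * N)
  rw [hdouble, sin_two_mul]
  field_simp

theorem limit_removable_singularity (h : ℝ) (hh : 0 < h) (N k : ℕ)
    (hk1 : 1 ≤ k) (hkN : k ≤ N - 1) (hN : 1 ≤ N) :
    Filter.Tendsto
      (fun φ : ℝ => Real.sin (φ * h * N) * Real.sin (φ * h / 2) /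
        (Real.cos (k * π / N) - Real.cos (φ * h)))
      (𝓝[≠] (k * π / (h * N)))
      (𝓝 ((-1 : ℝ) ^ k * N / (2 * Real.cos (k * π / (2 * N))))) :=
  limit_removable_singularity_general h hh N k hk1 hkN
end

section
/- Let f(t) = Σ_{j=1}^M γ_j cos(φ_j t), f_k = f(h(2k+1)/2) for k ∈ ℤ (so f_{−k−1} = f_k since f is even), and let p(z) = Π_{j=1}^M (z − cos(φ_j h)) = Σ_{ℓ=0}^M p_ℓ T_ℓ(z) in the Chebyshev basis. Then for every m ∈ ℤ: Σ_{ℓ=0}^M p_ℓ (f_{m+ℓ} + f_{m−ℓ}) = 0. -/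
open Polynomial Finset

theorem prony_relation_cosine (M : ℕ) (γ φ : Fin M → ℝ) (h : ℝ) (hh : 0 < h)
    (f : ℤ → ℝ)
    (hf : ∀ k : ℤ, f k = ∑ j, γ j * Real.cos (φ j * (h * (2 * (k : ℝ) + 1) / 2)))
    (p : ℕ → ℝ)
    (hp : ∏ j, (Polynomial.X - Polynomial.C (Real.cos (φ j * h)))
        = ∑ ℓ ∈ Finset.range (M + 1), Polynomial.C (p ℓ) * Polynomial.Chebyshev.T ℝ ℓ) :
    ∀ m : ℤ, ∑ ℓ ∈ Finset.range (M + 1), p ℓ * (f (m + ℓ) + f (m - ℓ)) = 0 := by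
  intro m
  have key2 : ∀ j : Fin M,
      ∑ ℓ ∈ Finset.range (M + 1), p ℓ * Real.cos (ℓ * (φ j * h)) = 0 := by
    intro j
    have h0 : Polynomial.eval (Real.cos (φ j * h))
        (∏ j' : Fin M, (Polynomial.X - Polynomial.C (Real.cos (φ j' * h)))) = 0 := by
      rw [Polynomial.eval_prod]
      apply Finset.prod_eq_zero (Finset.mem_univ j)
      simp
    rw [hp] at h0
    rw [Polynomial.eval_finset_sum] at h0
    simpa [Polynomial.Chebyshev.T_real_cos] using h0
  have expand : ∀ ℓ ∈ Finset.range (M + 1),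
      p ℓ * (f (m + ℓ) + f (m - ℓ))
        = ∑ j, (2 * γ j * Real.cos (φ j * (h * (2 * (m : ℝ) + 1) / 2)))
            * (p ℓ * Real.cos (ℓ * (φ j * h))) := by
    intro ℓ _
    rw [hf, hf, ← Finset.sum_add_distrib, Finset.mul_sum]
    apply Finset.sum_congr rfl
    intro j _
    have e1 : φ j * (h * (2 * ((m : ℝ) + (ℓ : ℝ)) + 1) / 2)
        = φ j * (h * (2 * (m : ℝ) + 1) / 2) + (ℓ : ℝ) * (φ j * h) := by ring
    have e2 : φ j * (h * (2 * ((m : ℝ) - (ℓ : ℝ)) + 1) / 2)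
        = φ j * (h * (2 * (m : ℝ) + 1) / 2) - (ℓ : ℝ) * (φ j * h) := by ring
    push_cast
    rw [e1, e2, Real.cos_add, Real.cos_sub]
    ring
  rw [Finset.sum_congr rfl expand, Finset.sum_comm]
  apply Finset.sum_eq_zero
  intro j _
  rw [← Finset.mul_sum, key2 j, mul_zero]
end

section
/- For f(t) = Σ_{j=1}^M γ_j cos(φ_j t) with f_k = f(h(2k+1)/2), the M×M Toeplitz+Hankel matrix M_M = (f_{m+ℓ} + f_{m−ℓ})_{m,ℓ=0}^{M−1} factors as M_M = 2 V^{(1)} D V^{(2)ᵀ}, where V^{(1)} = (cos(φ_j h (1+2m)/2))_{m=0,j=1}^{M−1,M}, V^{(2)} = (cos(φ_j h ℓ))_{ℓ=0,j=1}^{M−1,M}, and D = diag(γ_1,…,γ_M). -/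
open Finset Matrix

theorem toeplitz_hankel_factorization (M : ℕ) (γ φ : Fin M → ℝ) (h : ℝ) (hh : 0 < h)
    (hφinj : Function.Injective φ)
    (f : ℤ → ℝ)
    (hf : ∀ k : ℤ, f k = ∑ j, γ j * Real.cos (φ j * (h * (2 * (k : ℝ) + 1) / 2))) :
    (Matrix.of fun m ℓ : Fin M => f ((m : ℤ) + (ℓ : ℤ)) + f ((m : ℤ) - (ℓ : ℤ)))
      = (2 : ℝ) •
        ((Matrix.of fun (m : Fin M) (j : Fin M) =>
            Real.cos (φ j * h * (1 + 2 * (m : ℝ)) / 2)) *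
          Matrix.diagonal γ *
          (Matrix.of fun (ℓ : Fin M) (j : Fin M) => Real.cos (φ j * h * (ℓ : ℝ)))ᵀ) := by
  ext m ℓ
  simp only [Matrix.of_apply, Matrix.smul_apply, Matrix.mul_apply, Matrix.transpose_apply,
    Matrix.diagonal_apply, Finset.sum_ite_eq, Finset.sum_ite_eq', Finset.mem_univ, if_true, smul_eq_mul, mul_ite, mul_zero,
    Finset.mul_sum]
  rw [hf, hf, ← Finset.sum_add_distrib]
  apply Finset.sum_congr rfl
  intro j _
  push_cast
  have key : ∀ A B : ℝ, Real.cos (A + B) + Real.cos (A - B) = 2 * Real.cos A * Real.cos B := by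
    intro A B
    rw [Real.cos_add, Real.cos_sub]; ring
  have := key (φ j * (h * (2 * (m : ℝ) + 1) / 2)) (φ j * (h * (ℓ : ℝ)))
  calc γ j * Real.cos (φ j * (h * (2 * ((m : ℝ) + (ℓ : ℝ)) + 1) / 2))
        + γ j * Real.cos (φ j * (h * (2 * ((m : ℝ) - (ℓ : ℝ)) + 1) / 2))
      = γ j * (Real.cos (φ j * (h * (2 * (m : ℝ) + 1) / 2) + φ j * (h * (ℓ : ℝ)))
        + Real.cos (φ j * (h * (2 * (m : ℝ) + 1) / 2) - φ j * (h * (ℓ : ℝ)))) := by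
        ring_nf
    _ = 2 * (Real.cos (φ j * h * (1 + 2 * (m : ℝ)) / 2) * γ j * Real.cos (φ j * h * (ℓ : ℝ))) := by
        rw [this]; ring
end

section
/- Uniqueness of recovery: if Σ_{j=1}^M γ_j cos(φ_j t) = Σ_{j=1}^M δ_j cos(ψ_j t) for all t of the form h(2k+1)/2 with k = 0,…,2M−1, where φ_j, ψ_j ∈ [0, π/h) are each pairwise distinct families and γ_j, δ_j ∈ ℝ \ {0}, then M-term representations coincide: {(φ_j, γ_j)} = {(ψ_j, δ_j)} as sets. -/
/-!
Put `θ = φ h / 2 ∈ [0, π/2)`. The samples are `∑ γ cos ((2k+1) θ) = ∑ γ T_{2k+1}(cos θ)`, so the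
difference of the two cosine sums gives, for `k < 2M`, a vanishing combination of the odd
Chebyshev polynomials at the at most `2M` distinct nodes `cos θ ∈ (0, 1]`. Reflecting the nodes to
`± cos θ` with coefficients `± c` makes the even Chebyshev polynomials vanish as well, so a
functional supported on at most `4M` distinct nodes kills `T_0, …, T_{4M-1}`, hence every
polynomial of degree `< 4M`. Testing it on Lagrange basis polynomials shows that all coefficients
vanish, i.e. both sums have the same coefficient at every frequency.
-/

open Finset Real
open Function Polynomial Polynomial.Chebyshev

section Interpolation

variable {K ι : Type*} [Field K]

theorem eq_zero_of_forall_degree_lt_sum_mul_eval_eq_zero {s : Finset ι} {v : ι → K}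
    (hv : Set.InjOn v s) {n : ℕ} (hs : #s ≤ n) {c : ι → K}
    (hc : ∀ P : K[X], P.degree < n → ∑ i ∈ s, c i * P.eval (v i) = 0) :
    ∀ i ∈ s, c i = 0 := by
  classical
  intro i hi
  have hdeg : (Lagrange.basis s v i).degree < n := by
    rw [Lagrange.degree_basis hv hi]
    exact_mod_cast (by have := card_pos.mpr ⟨i, hi⟩; omega : #s - 1 < n)
  have hsum := hc _ hdeg
  rwa [sum_eq_single_of_mem i hi fun j hj hji => by
      rw [Lagrange.eval_basis_of_ne hji.symm hj, mul_zero],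
    Lagrange.eval_basis_self hv hi, mul_one] at hsum

theorem eq_zero_of_forall_sum_mul_eval_T_eq_zero [NeZero (2 : K)] {s : Finset ι} {v : ι → K}
    (hv : Set.InjOn v s) {n : ℕ} (hs : #s ≤ n) {c : ι → K}
    (hc : ∀ k < n, ∑ i ∈ s, c i * (T K k).eval (v i) = 0) :
    ∀ i ∈ s, c i = 0 := by
  refine eq_zero_of_forall_degree_lt_sum_mul_eval_eq_zero hv hs fun P hP => ?_
  let L : K[X] →ₗ[K] K := ∑ i ∈ s, c i • leval (v i)
  have hL : ∀ Q, L Q = ∑ i ∈ s, c i * Q.eval (v i) := fun Q => by simp [L]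
  have hspan : Submodule.span K (chebyshevTsequence K '' Set.Iio n) ≤ LinearMap.ker L := by
    rw [Submodule.span_le]
    rintro _ ⟨k, hk, rfl⟩
    exact (hL _).trans (hc k hk)
  rw [Sequence.span_degreeLT _ fun k _ =>
    (leadingCoeff_ne_zero.mpr ((chebyshevTsequence K).ne_zero k)).isUnit] at hspan
  exact (hL P).symm.trans (hspan (mem_degreeLT.mpr hP))

theorem eq_zero_of_forall_sum_mul_eval_T_odd_eq_zero [NeZero (2 : K)] {s : Finset ι}
    {v : ι → K} (hv : Set.InjOn v s) (hv_neg : ∀ i ∈ s, ∀ j ∈ s, v i ≠ -v j) {n : ℕ}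
    (hs : #s ≤ n) {c : ι → K}
    (hc : ∀ k < n, ∑ i ∈ s, c i * (T K (2 * k + 1)).eval (v i) = 0) :
    ∀ i ∈ s, c i = 0 := by
  have hext := eq_zero_of_forall_sum_mul_eval_T_eq_zero (s := s.disjSum s)
    (v := Sum.elim v (-v)) (c := Sum.elim c (-c)) (n := 2 * n) ?injOn
    (by rw [card_disjSum]; omega) ?annihilated
  · exact fun i hi => hext (.inl i) (by simpa using hi)
  case injOn =>
    rintro (i | i) hi (j | j) hj hij <;>
      simp only [mem_coe, inl_mem_disjSum, inr_mem_disjSum, Sum.elim_inl, Sum.elim_inr,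
        Pi.neg_apply, neg_inj, Sum.inl.injEq, Sum.inr.injEq, reduceCtorEq] at hi hj hij ⊢
    · exact hv hi hj hij
    · exact hv_neg i hi j hj hij
    · exact hv_neg j hj i hi hij.symm
    · exact hv hi hj hij
  case annihilated =>
    intro k hk
    simp only [sum_disjSum, Sum.elim_inl, Sum.elim_inr, Pi.neg_apply, T_eval_neg, neg_mul,
      sum_neg_distrib]
    obtain ⟨m, rfl⟩ | ⟨m, rfl⟩ := Nat.even_or_odd k
    · rw [Int.negOnePow_even _ (by exact_mod_cast Even.add_self m)]
      simp
    · rw [Int.negOnePow_odd _ (by exact_mod_cast odd_two_mul_add_one m)]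
      push_cast
      simp only [neg_one_mul, mul_neg, sum_neg_distrib, neg_neg, hc m (by omega), add_zero]

theorem eq_zero_of_forall_sum_mul_cos_odd_mul_eq_zero {s : Finset ι} {θ : ι → ℝ}
    (hθ : ∀ i ∈ s, θ i ∈ Set.Ico 0 (π / 2)) (hθinj : Set.InjOn θ s) {n : ℕ} (hs : #s ≤ n)
    {c : ι → ℝ} (hc : ∀ k < n, ∑ i ∈ s, c i * cos ((2 * k + 1) * θ i) = 0) :
    ∀ i ∈ s, c i = 0 := by
  have hθ_Icc : ∀ i ∈ s, θ i ∈ Set.Icc 0 π := fun i hi =>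
    ⟨(hθ i hi).1, by linarith [(hθ i hi).2, pi_pos]⟩
  have hcos_pos : ∀ i ∈ s, 0 < cos (θ i) := fun i hi =>
    cos_pos_of_mem_Ioo ⟨by linarith [(hθ i hi).1, pi_pos], (hθ i hi).2⟩
  refine eq_zero_of_forall_sum_mul_eval_T_odd_eq_zero (v := cos ∘ θ)
    (fun i hi j hj hij => hθinj hi hj (injOn_cos (hθ_Icc i hi) (hθ_Icc j hj) hij))
    (fun i hi j hj hij => by
      simp only [comp_apply] at hij
      linarith [hcos_pos i hi, hcos_pos j hj])
    hs fun k hk => ?_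
  simpa [T_real_cos] using hc k hk

end Interpolation

theorem mul_div_two_mem_Ico {x h : ℝ} (hh : 0 < h) (hx : x ∈ Set.Ico 0 (π / h)) :
    x * h / 2 ∈ Set.Ico 0 (π / 2) :=
  ⟨div_nonneg (mul_nonneg hx.1 hh.le) zero_le_two, by linarith [(lt_div_iff₀ hh).mp hx.2]⟩

theorem Function.Injective.sum_extend_zero_mul {α β R : Type*} [Fintype α] [Semiring R]
    {φ : α → β} (hφ : φ.Injective) (γ : α → R) (f : β → R) {s : Finset β}
    (hs : ∀ j, φ j ∈ s) : ∑ x ∈ s, extend φ γ 0 x * f x = ∑ j, γ j * f (φ j) := by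
  classical
  have hsub : univ.image φ ⊆ s := fun x hx => by
    obtain ⟨j, -, rfl⟩ := mem_image.mp hx
    exact hs j
  rw [← sum_subset hsub fun x _ hx => ?_, sum_image fun i _ j _ hij => hφ hij]
  · simp only [hφ.extend_apply]
  · rw [extend_apply' _ _ _ fun ⟨j, hj⟩ => hx (hj ▸ mem_image_of_mem φ (mem_univ j)),
      Pi.zero_apply, zero_mul]

theorem Function.Injective.range_prodMk_eq {α β M : Type*} [Zero M] {φ : α → β}
    (hφ : φ.Injective) {γ : α → M} (hγ : ∀ j, γ j ≠ 0) :
    Set.range (fun j => (φ j, γ j)) = {p | p.2 ≠ 0 ∧ extend φ γ 0 p.1 = p.2} := by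
  ext ⟨x, a⟩
  constructor
  · rintro ⟨j, hj⟩
    cases hj
    exact ⟨hγ j, hφ.extend_apply γ 0 j⟩
  · rintro ⟨ha, hx⟩
    dsimp only at ha hx
    by_cases hxφ : ∃ j, φ j = x
    · obtain ⟨j, rfl⟩ := hxφ
      exact ⟨j, by rw [← hx, hφ.extend_apply]⟩
    · exact absurd (by rw [← hx, extend_apply' _ _ _ hxφ, Pi.zero_apply]) ha

theorem uniqueness_of_cosine_sum_recovery (M : ℕ) (h : ℝ) (hh : 0 < h)
    (φ ψ : Fin M → ℝ) (γ δ : Fin M → ℝ)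
    (hφ : ∀ j, φ j ∈ Set.Ico (0 : ℝ) (π / h)) (hψ : ∀ j, ψ j ∈ Set.Ico (0 : ℝ) (π / h))
    (hφinj : Function.Injective φ) (hψinj : Function.Injective ψ)
    (hγ : ∀ j, γ j ≠ 0) (hδ : ∀ j, δ j ≠ 0)
    (heq : ∀ k < 2 * M,
      ∑ j, γ j * Real.cos (φ j * (h * (2 * (k : ℝ) + 1) / 2))
        = ∑ j, δ j * Real.cos (ψ j * (h * (2 * (k : ℝ) + 1) / 2))) :
    Set.range (fun j => (φ j, γ j)) = Set.range (fun j => (ψ j, δ j)) := by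
  classical
  set S := univ.image φ ∪ univ.image ψ
  have hφS : ∀ j, φ j ∈ S := fun j => mem_union_left _ (mem_image_of_mem φ (mem_univ j))
  have hψS : ∀ j, ψ j ∈ S := fun j => mem_union_right _ (mem_image_of_mem ψ (mem_univ j))
  have hS : ∀ x ∈ S, x * h / 2 ∈ Set.Ico 0 (π / 2) := by
    simp only [S, mem_union, mem_image, mem_univ, true_and]
    rintro _ (⟨j, rfl⟩ | ⟨j, rfl⟩)
    exacts [mul_div_two_mem_Ico hh (hφ j), mul_div_two_mem_Ico hh (hψ j)]
  have hcard : #S ≤ 2 * M := (card_union_le _ _).trans <| by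
    simpa [two_mul] using add_le_add (card_image_le (s := univ) (f := φ))
      (card_image_le (s := univ) (f := ψ))
  have hdiff : ∀ x ∈ S, extend φ γ 0 x - extend ψ δ 0 x = 0 := by
    refine eq_zero_of_forall_sum_mul_cos_odd_mul_eq_zero hS
      (fun x _ y _ hxy => by simpa [hh.ne'] using hxy) hcard fun k hk => ?_
    have hcos : ∀ x : ℝ, cos ((2 * k + 1) * (x * h / 2)) = cos (x * (h * (2 * k + 1) / 2)) :=
      fun x => by ring_nf
    simp only [hcos, sub_mul, sum_sub_distrib, hφinj.sum_extend_zero_mul _ _ hφS,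
      hψinj.sum_extend_zero_mul _ _ hψS, heq k hk, sub_self]
  have hext : extend φ γ 0 = extend ψ δ 0 := by
    funext x
    by_cases hx : x ∈ S
    · exact sub_eq_zero.mp (hdiff x hx)
    · rw [extend_apply' _ _ _ fun ⟨j, hj⟩ => hx (hj ▸ hφS j),
        extend_apply' _ _ _ fun ⟨j, hj⟩ => hx (hj ▸ hψS j)]
  rw [hφinj.range_prodMk_eq hγ, hψinj.range_prodMk_eq hδ, hext]
end

section
/- Given distinct real numbers b_1,…,b_M and nonzero reals a_1,…,a_M, and N ≥ 2M distinct sample points z_0,…,z_{N−1} all different from every b_j, set g_k = Σ_{j=1}^M a_j/(z_k − b_j). Then for any partition of {0,…,N−1} into sets Γ and S with |Γ| ≥ M and |S| ≥ M, the Loewner matrix L = ((g_ℓ − g_k)/(z_ℓ − z_k))_{ℓ∈Γ, k∈S} has rank exactly M. -/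
open Finset Matrix Polynomial

/-- Key lemma: columns of a Cauchy matrix are linearly independent. -/
lemma cauchy_ker_zero {M N : ℕ} (hM : 1 ≤ M)
    (b : Fin M → ℝ) (hb : Function.Injective b)
    (z : Fin N → ℝ) (hz : Function.Injective z)
    (hzb : ∀ k j, z k ≠ b j)
    (T : Finset (Fin N)) (hT : M ≤ T.card)
    (c : Fin M → ℝ) (hc : ∀ t ∈ T, ∑ j, c j / (z t - b j) = 0) :
    c = 0 := by
  classical
  set p : ℝ[X] :=
    ∑ j, Polynomial.C (c j) * ∏ i ∈ Finset.univ.erase j, (Polynomial.X - Polynomial.C (b i))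
    with hp
  have hdeg : p.natDegree < M := by
    refine lt_of_le_of_lt (Polynomial.natDegree_sum_le _ _) ?_
    rw [Finset.fold_max_lt]
    constructor
    · omega
    · intro j _
      calc (Polynomial.C (c j) *
            ∏ i ∈ Finset.univ.erase j, (Polynomial.X - Polynomial.C (b i))).natDegree
          ≤ (Polynomial.C (c j)).natDegree +
            (∏ i ∈ Finset.univ.erase j, (Polynomial.X - Polynomial.C (b i))).natDegree :=
            Polynomial.natDegree_mul_le
        _ ≤ 0 + ∑ i ∈ Finset.univ.erase j, (Polynomial.X - Polynomial.C (b i)).natDegree := by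
            gcongr
            · exact le_of_eq (Polynomial.natDegree_C _)
            · exact Polynomial.natDegree_prod_le _ _
        _ ≤ ∑ i ∈ Finset.univ.erase j, 1 := by
            rw [zero_add]
            exact Finset.sum_le_sum fun i _ => le_of_eq (Polynomial.natDegree_X_sub_C _)
        _ < M := by
            rw [Finset.sum_const, smul_eq_mul, mul_one, Finset.card_erase_of_mem (mem_univ j),
              Finset.card_univ, Fintype.card_fin]
            omega
  -- p vanishes at the z t for t ∈ T
  have heval : ∀ x ∈ T.image z, p.eval x = 0 := by
    intro x hx
    obtain ⟨t, ht, rfl⟩ := Finset.mem_image.mp hx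
    have hne : ∀ j, z t - b j ≠ 0 := fun j => sub_ne_zero.mpr (hzb t j)
    have : p.eval (z t) = (∏ i, (z t - b i)) * ∑ j, c j / (z t - b j) := by
      rw [hp]
      simp only [Polynomial.eval_finset_sum, Polynomial.eval_mul, Polynomial.eval_C,
        Polynomial.eval_prod, Polynomial.eval_sub, Polynomial.eval_X]
      rw [Finset.mul_sum]
      refine Finset.sum_congr rfl fun j _ => ?_
      rw [← Finset.mul_prod_erase (Finset.univ) (fun i => z t - b i) (mem_univ j)]
      have hd := hne j
      field_simp
    rw [this, hc t ht, mul_zero]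
  have hpz : p = 0 := by
    refine Polynomial.eq_zero_of_natDegree_lt_card_of_eval_eq_zero' p (T.image z) heval ?_
    have : T.card = (T.image z).card := (Finset.card_image_of_injective T hz).symm
    omega
  -- evaluate p at b j to recover c j
  funext j
  have h1 : p.eval (b j) = c j * ∏ i ∈ Finset.univ.erase j, (b j - b i) := by
    rw [hp]
    simp only [Polynomial.eval_finset_sum, Polynomial.eval_mul, Polynomial.eval_C,
      Polynomial.eval_prod, Polynomial.eval_sub, Polynomial.eval_X]
    rw [Finset.sum_eq_single j]
    · intro j' _ hj'
      have hjmem : j ∈ Finset.univ.erase j' := Finset.mem_erase.mpr ⟨Ne.symm hj', mem_univ j⟩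
      rw [Finset.prod_eq_zero hjmem (by ring), mul_zero]
    · intro h; exact absurd (mem_univ j) h
  have h2 : (∏ i ∈ Finset.univ.erase j, (b j - b i)) ≠ 0 := by
    refine Finset.prod_ne_zero_iff.mpr fun i hi => ?_
    have : i ≠ j := (Finset.mem_erase.mp hi).1
    exact sub_ne_zero.mpr fun h => this (hb h.symm)
  have h0 : p.eval (b j) = 0 := by rw [hpz, Polynomial.eval_zero]
  rcases mul_eq_zero.mp (h1.symm.trans h0) with h | h
  · simpa using h
  · exact absurd h h2

theorem loewner_matrix_rank (M N : ℕ) (hM : 1 ≤ M) (hN : 2 * M ≤ N)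
    (b : Fin M → ℝ) (hb : Function.Injective b)
    (a : Fin M → ℝ) (ha : ∀ j, a j ≠ 0)
    (z : Fin N → ℝ) (hz : Function.Injective z)
    (hzb : ∀ k j, z k ≠ b j)
    (g : Fin N → ℝ) (hg : ∀ k, g k = ∑ j, a j / (z k - b j))
    (Γ S : Finset (Fin N)) (hdisj : Disjoint Γ S) (hunion : Γ ∪ S = Finset.univ)
    (hΓ : M ≤ Γ.card) (hS : M ≤ S.card) :
    (Matrix.of fun (ℓ : {x // x ∈ Γ}) (k : {x // x ∈ S}) =>
        (g ℓ.1 - g k.1) / (z ℓ.1 - z k.1)).rank = M := by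
  classical
  set A : Matrix {x // x ∈ Γ} (Fin M) ℝ := Matrix.of fun ℓ j => 1 / (z ℓ.1 - b j) with hA
  set B : Matrix {x // x ∈ S} (Fin M) ℝ := Matrix.of fun k j => 1 / (z k.1 - b j) with hB
  set D : Matrix (Fin M) (Fin M) ℝ := Matrix.diagonal (fun j => -a j) with hD
  -- Factorization L = A * (D * Bᵀ)
  have hfact : (Matrix.of fun (ℓ : {x // x ∈ Γ}) (k : {x // x ∈ S}) =>
      (g ℓ.1 - g k.1) / (z ℓ.1 - z k.1)) = A * (D * Bᵀ) := by
    ext ℓ k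
    have hne : (ℓ.1 : Fin N) ≠ k.1 := by
      intro h
      exact (Finset.disjoint_left.mp hdisj ℓ.2) (h ▸ k.2)
    have hzz : z ℓ.1 - z k.1 ≠ 0 := sub_ne_zero.mpr (fun h => hne (hz h))
    have hl : ∀ j, z ℓ.1 - b j ≠ 0 := fun j => sub_ne_zero.mpr (hzb _ j)
    have hk : ∀ j, z k.1 - b j ≠ 0 := fun j => sub_ne_zero.mpr (hzb _ j)
    have hDB : D * Bᵀ = Matrix.of fun j (k : {x // x ∈ S}) => -a j * (1 / (z k.1 - b j)) := by
      ext j k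
      simp [hD, hB, Matrix.diagonal_mul]
    rw [hDB]
    simp only [Matrix.mul_apply, hA, Matrix.of_apply]
    rw [hg ℓ.1, hg k.1, ← Finset.sum_sub_distrib, Finset.sum_div]
    refine Finset.sum_congr rfl fun j _ => ?_
    have h1 := hl j
    have h2 := hk j
    field_simp
    ring
  rw [hfact]
  -- A has injective mulVecLin
  have hAinj : Function.Injective A.mulVecLin := by
    rw [← LinearMap.ker_eq_bot, LinearMap.ker_eq_bot']
    intro c hc
    refine cauchy_ker_zero hM b hb z hz hzb Γ hΓ c fun t ht => ?_
    have := congrFun hc ⟨t, ht⟩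
    simpa [Matrix.mulVecLin_apply, Matrix.mulVec, dotProduct, hA,
      div_eq_mul_inv, mul_comm] using this
  -- B has injective mulVecLin, hence Bᵀ has surjective mulVecLin
  have hBinj : Function.Injective B.mulVecLin := by
    rw [← LinearMap.ker_eq_bot, LinearMap.ker_eq_bot']
    intro c hc
    refine cauchy_ker_zero hM b hb z hz hzb S hS c fun t ht => ?_
    have := congrFun hc ⟨t, ht⟩
    simpa [Matrix.mulVecLin_apply, Matrix.mulVec, dotProduct, hB,
      div_eq_mul_inv, mul_comm] using this
  have hBrank : B.rank = M := by
    rw [Matrix.rank, LinearMap.finrank_range_of_inj hBinj, Module.finrank_fin_fun]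
  have hBTsurj : Function.Surjective Bᵀ.mulVecLin := by
    rw [← LinearMap.range_eq_top]
    have hr : Bᵀ.rank = M := by rw [Matrix.rank_transpose]; exact hBrank
    apply Submodule.eq_top_of_finrank_eq
    rw [Module.finrank_fin_fun]
    exact hr
  have hDsurj : Function.Surjective D.mulVecLin := by
    have hdet : IsUnit D.det := by
      rw [hD, Matrix.det_diagonal]
      exact (Finset.prod_ne_zero_iff.mpr fun j _ => neg_ne_zero.mpr (ha j)).isUnit
    intro v
    exact ⟨(D⁻¹).mulVecLin v, by
      simp [Matrix.mulVecLin_apply, Matrix.mulVec_mulVec, Matrix.mul_nonsing_inv _ hdet]⟩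
  have hDBsurj : Function.Surjective (D * Bᵀ).mulVecLin := by
    rw [Matrix.mulVecLin_mul, LinearMap.coe_comp]
    exact hDsurj.comp hBTsurj
  rw [Matrix.rank, Matrix.mulVecLin_mul,
    LinearMap.range_comp_of_range_eq_top _ (LinearMap.range_eq_top.mpr hDBsurj),
    LinearMap.finrank_range_of_inj hAinj, Module.finrank_fin_fun]
end

section
/- Loewner matrix factorization: with g_k = Σ_{j=1}^M a_j/(z_k − b_j) as above, the Loewner matrix ((g_ℓ − g_k)/(z_ℓ − z_k))_{ℓ∈Γ,k∈S} equals C_Γ · diag(−a_1,…,−a_M) · C_Sᵀ, where C_Γ = (1/(z_ℓ − b_j))_{ℓ∈Γ, j=1..M} and C_S = (1/(z_k − b_j))_{k∈S, j=1..M}. -/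
open Finset Matrix

theorem loewner_matrix_factorization (M N : ℕ)
    (b : Fin M → ℝ) (hb : Function.Injective b)
    (a : Fin M → ℝ)
    (z : Fin N → ℝ) (hz : Function.Injective z)
    (hzb : ∀ k j, z k ≠ b j)
    (g : Fin N → ℝ) (hg : ∀ k, g k = ∑ j, a j / (z k - b j))
    (Γ S : Finset (Fin N)) (hdisj : Disjoint Γ S) :
    (Matrix.of fun (ℓ : {x // x ∈ Γ}) (k : {x // x ∈ S}) =>
        (g ℓ.1 - g k.1) / (z ℓ.1 - z k.1))
      = (Matrix.of fun (ℓ : {x // x ∈ Γ}) (j : Fin M) => 1 / (z ℓ.1 - b j)) *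
        Matrix.diagonal (fun j => -a j) *
        (Matrix.of fun (k : {x // x ∈ S}) (j : Fin M) => 1 / (z k.1 - b j))ᵀ := by
  ext ℓ k
  have hne : ℓ.1 ≠ k.1 := fun h =>
    Finset.disjoint_left.mp hdisj ℓ.2 (h ▸ k.2)
  have hzne : z ℓ.1 - z k.1 ≠ 0 := sub_ne_zero.mpr (fun h => hne (hz h))
  simp only [Matrix.mul_apply, Matrix.diagonal_apply, Matrix.transpose_apply,
    Matrix.of_apply, mul_ite, mul_zero, Finset.sum_ite_eq', Finset.mem_univ, if_true]
  rw [hg, hg, ← Finset.sum_sub_distrib, Finset.sum_div]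
  refine Finset.sum_congr rfl fun j _ => ?_
  have h1 : z ℓ.1 - b j ≠ 0 := sub_ne_zero.mpr (hzb _ _)
  have h2 : z k.1 - b j ≠ 0 := sub_ne_zero.mpr (hzb _ _)
  field_simp
  ring
end

section
/- Matrix pencil eigenvalues for Loewner matrices: let g_k = Σ_{j=1}^M a_j/(z_k − b_j) with distinct b_j, nonzero a_j, N − M ≥ M sample points z_ℓ (ℓ ∈ Γ), M sample points z_k (k ∈ S), all distinct and different from the b_j. Define L^{(0)} = ((g_ℓ − g_k)/(z_ℓ − z_k))_{ℓ∈Γ,k∈S} and L^{(1)} = ((g_ℓ z_ℓ − g_k z_k)/(z_ℓ − z_k))_{ℓ∈Γ,k∈S}. Then rank(z L^{(0)} − L^{(1)}) = M − 1 if and only if z ∈ {b_1,…,b_M}, and otherwise the rank is M. -/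
open Finset Matrix

lemma cauchy_kernel {M : ℕ} (b : Fin M → ℝ) (hb : Function.Injective b)
    {ι : Type} [Fintype ι] (x : ι → ℝ) (hx : Function.Injective x)
    (hxb : ∀ i j, x i ≠ b j) (hcard : M ≤ Fintype.card ι)
    (v : Fin M → ℝ) (hv : ∀ i, ∑ j, v j / (x i - b j) = 0) : v = 0 := by
  rcases Nat.eq_zero_or_pos M with rfl | hM
  · exact funext fun j => j.elim0
  classical
  set P : Polynomial ℝ :=
    ∑ j, Polynomial.C (v j) * ∏ i ∈ Finset.univ.erase j, (Polynomial.X - Polynomial.C (b i))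
    with hP
  have hdeg : P.natDegree < M := by
    have h1 : P.natDegree ≤ M - 1 := by
      refine Polynomial.natDegree_sum_le_of_forall_le _ _ fun j _ => ?_
      refine (Polynomial.natDegree_C_mul_le _ _).trans (le_of_eq ?_)
      rw [Polynomial.natDegree_prod _ _ (fun i _ => Polynomial.X_sub_C_ne_zero _)]
      simp [Polynomial.natDegree_X_sub_C, Finset.card_erase_of_mem]
    omega
  have hPeval : ∀ i, P.eval (x i) = 0 := by
    intro i
    have hterm : ∀ j : Fin M,
        v j * ∏ i' ∈ Finset.univ.erase j, (x i - b i')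
          = (v j / (x i - b j)) * ∏ i', (x i - b i') := by
      intro j
      rw [← Finset.mul_prod_erase Finset.univ _ (Finset.mem_univ j)]
      have h0 : x i - b j ≠ 0 := sub_ne_zero.mpr (hxb i j)
      field_simp
    calc P.eval (x i) = ∑ j, v j * ∏ i' ∈ Finset.univ.erase j, (x i - b i') := by
          simp [hP, Polynomial.eval_finset_sum, Polynomial.eval_prod]
      _ = (∑ j, v j / (x i - b j)) * ∏ i', (x i - b i') := by
          rw [Finset.sum_mul]; exact Finset.sum_congr rfl fun j _ => hterm j
      _ = 0 := by rw [hv i, zero_mul]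
  have hP0 : P = 0 :=
    Polynomial.eq_zero_of_natDegree_lt_card_of_eval_eq_zero P hx hPeval
      (lt_of_lt_of_le hdeg hcard)
  funext j0
  have he : P.eval (b j0) = v j0 * ∏ i' ∈ Finset.univ.erase j0, (b j0 - b i') := by
    simp only [hP, Polynomial.eval_finset_sum, Polynomial.eval_mul, Polynomial.eval_C,
      Polynomial.eval_prod, Polynomial.eval_sub, Polynomial.eval_X]
    refine Finset.sum_eq_single j0 (fun j _ hj => ?_) (fun h => absurd (Finset.mem_univ j0) h)
    rw [Finset.prod_eq_zero (Finset.mem_erase.mpr ⟨Ne.symm hj, Finset.mem_univ _⟩) (sub_self (b j0)),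
      mul_zero]
  have hprod : (∏ i' ∈ Finset.univ.erase j0, (b j0 - b i')) ≠ 0 :=
    Finset.prod_ne_zero_iff.mpr fun i' hi' =>
      sub_ne_zero.mpr fun hbe => (Finset.mem_erase.mp hi').1 (hb hbe.symm)
  rw [hP0, Polynomial.eval_zero] at he
  have := mul_eq_zero.mp he.symm
  simpa [hprod] using this

lemma rank_mul_eq_of_injective {m n p : Type} [Fintype m] [Fintype n] [Fintype p]
    (A : Matrix m n ℝ) (hA : Function.Injective A.mulVecLin) (B : Matrix n p ℝ) :
    (A * B).rank = B.rank := by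
  rw [Matrix.rank, Matrix.rank, Matrix.mulVecLin_mul, LinearMap.range_comp]
  exact ((Submodule.equivMapOfInjective _ hA _).finrank_eq).symm

lemma cauchy_mulVecLin_injective {M : ℕ} (b : Fin M → ℝ) (hb : Function.Injective b)
    {ι : Type} [Fintype ι] (x : ι → ℝ) (hx : Function.Injective x)
    (hxb : ∀ i j, x i ≠ b j) (hcard : M ≤ Fintype.card ι) :
    Function.Injective (Matrix.of fun i (j : Fin M) => 1 / (x i - b j)).mulVecLin := by
  rw [← LinearMap.ker_eq_bot]
  refine LinearMap.ker_eq_bot'.mpr fun v hv => ?_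
  refine cauchy_kernel b hb x hx hxb hcard v fun i => ?_
  have h := congrFun hv i
  simpa [Matrix.mulVecLin_apply, Matrix.mulVec, dotProduct, div_eq_mul_inv, mul_comm] using h

theorem loewner_matrix_pencil_eigenvalues (M N : ℕ) (hM : 1 ≤ M) (hN : 2 * M ≤ N)
    (b : Fin M → ℝ) (hb : Function.Injective b)
    (a : Fin M → ℝ) (ha : ∀ j, a j ≠ 0)
    (z : Fin N → ℝ) (hz : Function.Injective z)
    (hzb : ∀ k j, z k ≠ b j)
    (g : Fin N → ℝ) (hg : ∀ k, g k = ∑ j, a j / (z k - b j))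
    (Γ S : Finset (Fin N)) (hdisj : Disjoint Γ S) (hunion : Γ ∪ S = Finset.univ)
    (hΓ : Γ.card = N - M) (hS : S.card = M)
    (L0 L1 : Matrix {x // x ∈ Γ} {x // x ∈ S} ℝ)
    (hL0 : L0 = Matrix.of fun ℓ k => (g ℓ.1 - g k.1) / (z ℓ.1 - z k.1))
    (hL1 : L1 = Matrix.of fun ℓ k => (g ℓ.1 * z ℓ.1 - g k.1 * z k.1) / (z ℓ.1 - z k.1)) :
    ∀ zz : ℝ,
      ((zz • L0 - L1).rank = M - 1 ↔ zz ∈ Set.range b) ∧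
      (zz ∉ Set.range b → (zz • L0 - L1).rank = M) := by
  intro zz
  classical
  -- Cauchy factors
  set xΓ : {x // x ∈ Γ} → ℝ := fun ℓ => z ℓ.1 with hxΓ
  set xS : {x // x ∈ S} → ℝ := fun k => z k.1 with hxS
  have hxΓinj : Function.Injective xΓ := fun p q h => Subtype.ext (hz h)
  have hxSinj : Function.Injective xS := fun p q h => Subtype.ext (hz h)
  have hxΓb : ∀ i j, xΓ i ≠ b j := fun i j => hzb i.1 j
  have hxSb : ∀ i j, xS i ≠ b j := fun i j => hzb i.1 j
  have hcardΓ : M ≤ Fintype.card {x // x ∈ Γ} := by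
    rw [Fintype.card_coe, hΓ]; omega
  have hcardS : M ≤ Fintype.card {x // x ∈ S} := by
    rw [Fintype.card_coe, hS]
  set CΓ : Matrix {x // x ∈ Γ} (Fin M) ℝ := Matrix.of fun ℓ j => 1 / (xΓ ℓ - b j) with hCΓ
  set CS : Matrix {x // x ∈ S} (Fin M) ℝ := Matrix.of fun k j => 1 / (xS k - b j) with hCS
  set w : Fin M → ℝ := fun j => -(a j) * (zz - b j) with hw
  -- the factorization
  have key : zz • L0 - L1 = CΓ * (Matrix.diagonal w * CSᵀ) := by
    ext ℓ k
    have hne : z ℓ.1 ≠ z k.1 := by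
      intro h
      exact (Finset.disjoint_left.mp hdisj ℓ.2) (hz h ▸ k.2)
    have hd : z ℓ.1 - z k.1 ≠ 0 := sub_ne_zero.mpr hne
    have hrhs : (CΓ * (Matrix.diagonal w * CSᵀ)) ℓ k
        = ∑ j, (1 / (z ℓ.1 - b j)) * (w j * (1 / (z k.1 - b j))) := by
      simp [Matrix.mul_apply, Matrix.diagonal_apply, ite_mul, hCΓ, hCS, hxΓ, hxS]
    rw [hrhs]
    have hlhs : (zz • L0 - L1) ℓ k
        = zz * ((g ℓ.1 - g k.1) / (z ℓ.1 - z k.1))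
          - (g ℓ.1 * z ℓ.1 - g k.1 * z k.1) / (z ℓ.1 - z k.1) := by
      simp [hL0, hL1]
    rw [hlhs, hg ℓ.1, hg k.1, Finset.sum_mul, Finset.sum_mul,
      ← Finset.sum_sub_distrib, ← Finset.sum_sub_distrib,
      Finset.sum_div, Finset.sum_div, Finset.mul_sum, ← Finset.sum_sub_distrib]
    refine Finset.sum_congr rfl fun j _ => ?_
    have hp : z ℓ.1 - b j ≠ 0 := sub_ne_zero.mpr (hzb ℓ.1 j)
    have hq : z k.1 - b j ≠ 0 := sub_ne_zero.mpr (hzb k.1 j)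
    field_simp [hw]
    ring
  have hCΓinj : Function.Injective CΓ.mulVecLin :=
    cauchy_mulVecLin_injective b hb xΓ hxΓinj hxΓb hcardΓ
  have hCSinj : Function.Injective CS.mulVecLin :=
    cauchy_mulVecLin_injective b hb xS hxSinj hxSb hcardS
  have hrank : (zz • L0 - L1).rank = (Matrix.diagonal w).rank := by
    rw [key, rank_mul_eq_of_injective CΓ hCΓinj, ← Matrix.rank_transpose,
      Matrix.transpose_mul, Matrix.transpose_transpose, Matrix.diagonal_transpose,
      rank_mul_eq_of_injective CS hCSinj]
  rw [Matrix.rank_diagonal] at hrank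
  constructor
  · constructor
    · intro hr
      by_contra hnot
      have hall : ∀ j, w j ≠ 0 := by
        intro j
        simp only [hw, mul_ne_zero_iff, neg_ne_zero]
        exact ⟨ha j, sub_ne_zero.mpr fun h => hnot ⟨j, h.symm⟩⟩
      have : Fintype.card {i // w i ≠ 0} = M := by
        rw [Fintype.card_subtype]
        rw [Finset.filter_true_of_mem fun i _ => hall i]
        simp
      omega
    · rintro ⟨j0, hj0⟩
      rw [hrank]
      have hiff : ∀ j, w j ≠ 0 ↔ j ≠ j0 := by
        intro j
        simp only [hw, mul_ne_zero_iff, neg_ne_zero]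
        constructor
        · rintro ⟨-, h⟩ rfl
          exact h (by rw [hj0, sub_self])
        · intro hj
          exact ⟨ha j, sub_ne_zero.mpr fun h => hj (hb (hj0.trans h)).symm⟩
      have : Fintype.card {i // w i ≠ 0} = Fintype.card {i // i ≠ j0} :=
        Fintype.card_congr (Equiv.subtypeEquivRight hiff)
      rw [this, Fintype.card_subtype_compl (p := fun i => i = j0), Fintype.card_subtype_eq,
        Fintype.card_fin]
  · intro hnot
    rw [hrank]
    have hall : ∀ j, w j ≠ 0 := by
      intro j
      simp only [hw, mul_ne_zero_iff, neg_ne_zero]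
      exact ⟨ha j, sub_ne_zero.mpr fun h => hnot ⟨j, h.symm⟩⟩
    rw [Fintype.card_subtype, Finset.filter_true_of_mem fun i _ => hall i]
    simp
end

section
/- For f(t) = Σ_{j=1}^M γ_j cos(φ_j t) with f_k = f(h(2k+1)/2) and N ≥ L ≥ M, the three Toeplitz+Hankel matrices M^{(κ)} = (1/2)(f_{m+ℓ+κ} + f_{m−ℓ+κ})_{m=0..N−L−1, ℓ=0..L−1} for κ ∈ {−1, 0, 1} satisfy (1/2)(M^{(−1)} + M^{(1)}) = V^{(1)} · diag(γ_j) · diag(cos(φ_j h)) · V^{(2)ᵀ} and M^{(0)} = V^{(1)} · diag(γ_j) · V^{(2)ᵀ}, where V^{(1)} = (cos(φ_j h (1+2m)/2))_{m=0..N−L−1, j=1..M} and V^{(2)} = (cos(φ_j h ℓ))_{ℓ=0..L−1, j=1..M}. -/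
open Finset Matrix

lemma key0 (a m l : ℝ) :
    (1/2) * (Real.cos (a * (2*(m+l)+1)/2) + Real.cos (a * (2*(m-l)+1)/2))
      = Real.cos (a * (1 + 2*m) / 2) * Real.cos (a * l) := by
  have e1 : a * (2*(m+l)+1)/2 = a * (1 + 2*m) / 2 + a * l := by ring
  have e2 : a * (2*(m-l)+1)/2 = a * (1 + 2*m) / 2 - a * l := by ring
  rw [e1, e2, Real.cos_add, Real.cos_sub]; ring

lemma key1 (a m l : ℝ) :
    (1/2) * ((1/2) * (Real.cos (a * (2*(m+l-1)+1)/2) + Real.cos (a * (2*(m-l-1)+1)/2))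
      + (1/2) * (Real.cos (a * (2*(m+l+1)+1)/2) + Real.cos (a * (2*(m-l+1)+1)/2)))
      = Real.cos (a * (1 + 2*m) / 2) * Real.cos a * Real.cos (a * l) := by
  have e1 : a * (2*(m+l-1)+1)/2 = (a * (1 + 2*m) / 2 + a * l) - a := by ring
  have e2 : a * (2*(m-l-1)+1)/2 = (a * (1 + 2*m) / 2 - a * l) - a := by ring
  have e3 : a * (2*(m+l+1)+1)/2 = (a * (1 + 2*m) / 2 + a * l) + a := by ring
  have e4 : a * (2*(m-l+1)+1)/2 = (a * (1 + 2*m) / 2 - a * l) + a := by ring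
  rw [e1, e2, e3, e4]
  simp only [Real.cos_add, Real.cos_sub, Real.sin_add, Real.sin_sub]
  ring

theorem toeplitz_hankel_shifted_factorizations (M L N : ℕ)
    (hML : M ≤ L) (hLN : L ≤ N)
    (γ φ : Fin M → ℝ) (h : ℝ) (hh : 0 < h)
    (f : ℤ → ℝ)
    (hf : ∀ k : ℤ, f k = ∑ j, γ j * Real.cos (φ j * (h * (2 * (k : ℝ) + 1) / 2)))
    (Mm1 M0 M1 : Matrix (Fin (N - L)) (Fin L) ℝ)
    (hMm1 : ∀ m ℓ, Mm1 m ℓ = (1 / 2) * (f ((m : ℤ) + (ℓ : ℤ) - 1) + f ((m : ℤ) - (ℓ : ℤ) - 1)))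
    (hM0 : ∀ m ℓ, M0 m ℓ = (1 / 2) * (f ((m : ℤ) + (ℓ : ℤ)) + f ((m : ℤ) - (ℓ : ℤ))))
    (hM1 : ∀ m ℓ, M1 m ℓ = (1 / 2) * (f ((m : ℤ) + (ℓ : ℤ) + 1) + f ((m : ℤ) - (ℓ : ℤ) + 1)))
    (V1 : Matrix (Fin (N - L)) (Fin M) ℝ)
    (hV1 : ∀ m j, V1 m j = Real.cos (φ j * h * (1 + 2 * (m : ℝ)) / 2))
    (V2 : Matrix (Fin L) (Fin M) ℝ)
    (hV2 : ∀ ℓ j, V2 ℓ j = Real.cos (φ j * h * (ℓ : ℝ))) :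
    (1 / 2 : ℝ) • (Mm1 + M1)
        = V1 * Matrix.diagonal γ * Matrix.diagonal (fun j => Real.cos (φ j * h)) * V2ᵀ ∧
    M0 = V1 * Matrix.diagonal γ * V2ᵀ := by
  constructor
  · have hd : V1 * Matrix.diagonal γ * Matrix.diagonal (fun j => Real.cos (φ j * h)) * V2ᵀ
        = V1 * Matrix.diagonal (fun j => γ j * Real.cos (φ j * h)) * V2ᵀ := by
      rw [Matrix.mul_assoc V1, Matrix.diagonal_mul_diagonal]
    rw [hd]
    ext m ℓ
    rw [Matrix.mul_apply]
    simp only [Matrix.smul_apply, Matrix.add_apply, hMm1, hM1, hf, Matrix.mul_diagonal,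
      Matrix.transpose_apply, smul_eq_mul, Finset.mul_sum, ← Finset.sum_add_distrib]
    apply Finset.sum_congr rfl
    intro j _
    rw [hV1, hV2]
    push_cast
    have e : ∀ x : ℝ, φ j * (h * x / 2) = φ j * h * x / 2 := fun x => by ring
    simp only [e]
    linear_combination γ j * key1 (φ j * h) (m : ℝ) (ℓ : ℝ)
  · ext m ℓ
    rw [Matrix.mul_apply]
    simp only [hM0, hf, Matrix.mul_diagonal, Matrix.transpose_apply,
      Finset.mul_sum, ← Finset.sum_add_distrib]
    apply Finset.sum_congr rfl
    intro j _
    rw [hV1, hV2]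
    push_cast
    have e : ∀ x : ℝ, φ j * (h * x / 2) = φ j * h * x / 2 := fun x => by ring
    simp only [e]
    linear_combination γ j * key0 (φ j * h) (m : ℝ) (ℓ : ℝ)
end

section
/- Consequently, the generalized eigenvalues of the rectangular matrix pencil z M^{(0)} − (1/2)(M^{(−1)} + M^{(1)}) (i.e., the values z for which the pencil has rank < M) include exactly the values cos(φ_j h), j = 1,…,M, provided the Vandermonde factors V^{(1)}, V^{(2)} have full column rank M and all γ_j ≠ 0. -/
open Finset Matrix

lemma cos_key (z t u v : ℝ) :
    z * (1 / 2 * (Real.cos (u + v + t) + Real.cos (u - v + t))) -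
      1 / 2 * (1 / 2 * (Real.cos (u + v - t) + Real.cos (u - v - t)) +
        1 / 2 * (Real.cos (u + v + 3 * t) + Real.cos (u - v + 3 * t))) =
      (z - Real.cos (2 * t)) * Real.cos (u + t) * Real.cos v := by
  have C0 : ∀ x y : ℝ, Real.cos (x - y) + Real.cos (x + y) =
      2 * Real.cos x * Real.cos y := by
    intro x y
    rw [Real.cos_sub, Real.cos_add]
    ring
  have A : Real.cos (u + v - t) + Real.cos (u + v + 3 * t) =
      2 * Real.cos (u + v + t) * Real.cos (2 * t) := by
    rw [show u + v - t = (u + v + t) - 2 * t by ring,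
      show u + v + 3 * t = (u + v + t) + 2 * t by ring]
    exact C0 _ _
  have B : Real.cos (u - v - t) + Real.cos (u - v + 3 * t) =
      2 * Real.cos (u - v + t) * Real.cos (2 * t) := by
    rw [show u - v - t = (u - v + t) - 2 * t by ring,
      show u - v + 3 * t = (u - v + t) + 2 * t by ring]
    exact C0 _ _
  have C : Real.cos (u + v + t) + Real.cos (u - v + t) =
      2 * Real.cos (u + t) * Real.cos v := by
    rw [show u + v + t = (u + t) + v by ring,
      show u - v + t = (u + t) - v by ring, add_comm (Real.cos ((u + t) + v))]
    exact C0 _ _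
  linear_combination (-(1 : ℝ) / 4) * A + (-(1 : ℝ) / 4) * B +
    ((z - Real.cos (2 * t)) / 2) * C

theorem toeplitz_hankel_pencil_eigenvalues (M L N : ℕ) (hM : 1 ≤ M)
    (hML : M ≤ L) (hLN : L ≤ N)
    (γ φ : Fin M → ℝ) (h : ℝ) (hh : 0 < h)
    (hγ : ∀ j, γ j ≠ 0)
    (f : ℤ → ℝ)
    (hf : ∀ k : ℤ, f k = ∑ j, γ j * Real.cos (φ j * (h * (2 * (k : ℝ) + 1) / 2)))
    (Mm1 M0 M1 : Matrix (Fin (N - L)) (Fin L) ℝ)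
    (hMm1 : ∀ m ℓ, Mm1 m ℓ = (1 / 2) * (f ((m : ℤ) + (ℓ : ℤ) - 1) + f ((m : ℤ) - (ℓ : ℤ) - 1)))
    (hM0 : ∀ m ℓ, M0 m ℓ = (1 / 2) * (f ((m : ℤ) + (ℓ : ℤ)) + f ((m : ℤ) - (ℓ : ℤ))))
    (hM1 : ∀ m ℓ, M1 m ℓ = (1 / 2) * (f ((m : ℤ) + (ℓ : ℤ) + 1) + f ((m : ℤ) - (ℓ : ℤ) + 1)))
    (V1 : Matrix (Fin (N - L)) (Fin M) ℝ)
    (hV1 : ∀ m j, V1 m j = Real.cos (φ j * h * (1 + 2 * (m : ℝ)) / 2))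
    (V2 : Matrix (Fin L) (Fin M) ℝ)
    (hV2 : ∀ ℓ j, V2 ℓ j = Real.cos (φ j * h * (ℓ : ℝ)))
    (hV1rank : V1.rank = M) (hV2rank : V2.rank = M) :
    ∀ z : ℝ, (z • M0 - (1 / 2 : ℝ) • (Mm1 + M1)).rank < M ↔
      z ∈ Set.range (fun j => Real.cos (φ j * h)) := by
  classical
  intro z
  have hfac : z • M0 - (1 / 2 : ℝ) • (Mm1 + M1) =
      V1 * Matrix.diagonal (fun j => γ j * (z - Real.cos (φ j * h))) * V2ᵀ := by
    ext m ℓ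
    simp only [Matrix.sub_apply, Matrix.smul_apply, Matrix.add_apply, smul_eq_mul]
    rw [Matrix.mul_apply]
    simp only [Matrix.mul_diagonal, Matrix.transpose_apply]
    rw [hM0, hMm1, hM1]
    simp only [hf, hV1, hV2]
    simp only [Finset.mul_sum, ← Finset.sum_add_distrib, ← Finset.sum_sub_distrib]
    refine Finset.sum_congr rfl fun j _ => ?_
    have K := cos_key z (φ j * h / 2) (φ j * h * (m : ℝ)) (φ j * h * (ℓ : ℝ))
    rw [show 2 * (φ j * h / 2) = φ j * h by ring] at K
    push_cast
    ring_nf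
    ring_nf at K
    linear_combination γ j * K
  rw [hfac]
  set w : Fin M → ℝ := fun j => γ j * (z - Real.cos (φ j * h)) with hwdef
  -- V2ᵀ has full row rank, so right multiplication preserves rank
  have hV2T : LinearMap.range (Matrix.mulVecLin V2ᵀ) = ⊤ := by
    apply Submodule.eq_top_of_finrank_eq
    have h1 : Module.finrank ℝ (LinearMap.range (Matrix.mulVecLin V2ᵀ)) = M := by
      have : V2ᵀ.rank = M := by rw [Matrix.rank_transpose, hV2rank]
      exact this
    simp [h1]
  have hrank2 : (V1 * Matrix.diagonal w * V2ᵀ).rank = (V1 * Matrix.diagonal w).rank := by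
    rw [Matrix.rank, Matrix.mulVecLin_mul,
      LinearMap.range_comp_of_range_eq_top _ hV2T]
    rfl
  have hV1inj : Function.Injective V1.mulVecLin := by
    rw [← LinearMap.ker_eq_bot]
    have hr : Module.finrank ℝ (LinearMap.range V1.mulVecLin) = M := hV1rank
    have h2 := LinearMap.finrank_range_add_finrank_ker V1.mulVecLin
    rw [hr] at h2
    simp only [Module.finrank_pi, Fintype.card_fin] at h2
    have hk : Module.finrank ℝ (LinearMap.ker V1.mulVecLin) = 0 := by omega
    exact Submodule.finrank_eq_zero.mp hk
  have hrank1 : (V1 * Matrix.diagonal w).rank = (Matrix.diagonal w).rank := by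
    rw [Matrix.rank, Matrix.rank, Matrix.mulVecLin_mul, LinearMap.range_comp]
    exact (LinearEquiv.finrank_eq (Submodule.equivMapOfInjective _ hV1inj _)).symm
  rw [hrank2, hrank1, Matrix.rank_diagonal]
  constructor
  · intro hlt
    by_contra hz
    simp only [Set.mem_range, not_exists] at hz
    have hall : ∀ j, w j ≠ 0 := by
      intro j
      simp only [hwdef]
      exact mul_ne_zero (hγ j) (sub_ne_zero_of_ne fun hc => hz j hc.symm)
    have hcard : Fintype.card {i // w i ≠ 0} = M := by
      rw [Fintype.card_subtype]
      rw [Finset.filter_true_of_mem fun i _ => hall i]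
      simp
    omega
  · rintro ⟨j, hj⟩
    have hwj : ¬ w j ≠ 0 := by simp [hwdef, hj]
    have := Fintype.card_subtype_lt (p := fun i => w i ≠ 0) hwj
    simpa using this
end
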